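/- Let S_n = ∑_{k=0}^n (C(n,k))^{-1}. Then for all n ≥ 2, S_n = 1 + ((n+1)/(2n)) · S_{n-1}. -/

import Mathlib

/-!
Since `C(n+1,k) = (n+1)/(n+1-k) · C(n,k)` and `C(n+1,k+1) = (n+1)/(k+1) · C(n,k)`, neighbouring
terms pair up as `1/C(n+1,k) + 1/C(n+1,k+1) = (n+2)/(n+1) · 1/C(n,k)`. Summing over `0 ≤ k ≤ n`
counts every term of `S_{n+1}` twice except the two end terms, both equal to `1`, so
`2 (S_{n+1} - 1) = (n+2)/(n+1) · S_n`.
-/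

open Finset

theorem inv_choose_add_inv_choose_succ {K : Type*} [Field K] [CharZero K] {n k : ℕ}
    (hk : k ≤ n) :
    ((n + 1).choose k : K)⁻¹ + ((n + 1).choose (k + 1) : K)⁻¹
      = (n + 2) / (n + 1) * (n.choose k : K)⁻¹ := by
  have hb : ((n + 1).choose k : K) ≠ 0 := by exact_mod_cast (Nat.choose_pos (by omega)).ne'
  have hc : ((n + 1).choose (k + 1) : K) ≠ 0 := by
    exact_mod_cast (Nat.choose_pos (by omega)).ne'
  have ha : (n.choose k : K) ≠ 0 := by exact_mod_cast (Nat.choose_pos hk).ne'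
  have hlow : (n.choose k : K) * (n + 1) = (n + 1).choose k * (n + 1 - k) := by
    have h := congrArg (Nat.cast : ℕ → K) (Nat.choose_mul_succ_eq n k)
    push_cast [Nat.cast_sub (by omega : k ≤ n + 1)] at h
    exact h
  have hup : (n + 1 : K) * n.choose k = (n + 1).choose (k + 1) * (k + 1) := by
    exact_mod_cast Nat.add_one_mul_choose_eq n k
  field_simp
  linear_combination ((n + 1).choose (k + 1) : K) * hlow + ((n + 1).choose k : K) * hup

theorem sum_range_inv_choose_succ {K : Type*} [Field K] [CharZero K] (n : ℕ) :
    ∑ k ∈ range (n + 2), ((n + 1).choose k : K)⁻¹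
      = 1 + (n + 2) / (2 * (n + 1)) * ∑ k ∈ range (n + 1), (n.choose k : K)⁻¹ := by
  have hpairs : ∑ k ∈ range (n + 1), (((n + 1).choose k : K)⁻¹ + ((n + 1).choose (k + 1) : K)⁻¹)
      = (n + 2) / (n + 1) * ∑ k ∈ range (n + 1), (n.choose k : K)⁻¹ := by
    rw [mul_sum]
    exact sum_congr rfl fun k hk ↦
      inv_choose_add_inv_choose_succ (Nat.lt_succ_iff.mp (mem_range.mp hk))
  have hdrop_last : ∑ k ∈ range (n + 2), ((n + 1).choose k : K)⁻¹
      = ∑ k ∈ range (n + 1), ((n + 1).choose k : K)⁻¹ + 1 := by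
    simp [sum_range_succ _ (n + 1)]
  have hdrop_first : ∑ k ∈ range (n + 2), ((n + 1).choose k : K)⁻¹
      = ∑ k ∈ range (n + 1), ((n + 1).choose (k + 1) : K)⁻¹ + 1 := by
    simp [sum_range_succ' _ (n + 1)]
  rw [sum_add_distrib] at hpairs
  rw [mul_comm 2, ← div_div]
  linear_combination (hdrop_last + hdrop_first + hpairs) / 2

theorem stmt_4 (S : ℕ → ℝ)
    (hS : ∀ n : ℕ, S n = ∑ k ∈ Finset.range (n + 1), ((n.choose k : ℝ))⁻¹) :
    ∀ n : ℕ, 2 ≤ n → S n = 1 + ((n + 1 : ℝ) / (2 * n)) * S (n - 1) := by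
  intro n hn
  obtain ⟨m, rfl⟩ : ∃ m, n = m + 1 := ⟨n - 1, by omega⟩
  rw [hS, hS, Nat.add_sub_cancel, sum_range_inv_choose_succ]
  push_cast
  ring
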